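/- arXiv:2501.04380 — 4 statements merged into one kernel-verified Lean document; each statement's English description precedes it below -/
import Mathlib

section
/- Let p ∈ ℝ³ with p ≠ 0 and p̂ = p/|p|, and let T be any 2×2 complex matrix. Then the 4×4 block-diagonal matrix O = diag(T, (σ·p̂) T (σ·p̂)) commutes with the Dirac Hamiltonian H = [[mc² I₂, c(σ·p)], [c(σ·p), -mc² I₂]]. -/
noncomputable def σx : Matrix (Fin 2) (Fin 2) ℂ := !![0, 1; 1, 0]
noncomputable def σy : Matrix (Fin 2) (Fin 2) ℂ := !![0, -Complex.I; Complex.I, 0]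
noncomputable def σz : Matrix (Fin 2) (Fin 2) ℂ := !![1, 0; 0, -1]

noncomputable def σdot (a b c : ℝ) : Matrix (Fin 2) (Fin 2) ℂ :=
  (a : ℂ) • σx + (b : ℂ) • σy + (c : ℂ) • σz

lemma σdot_eq (a b c : ℝ) : σdot a b c = !![(c:ℂ), a - b*Complex.I; a + b*Complex.I, -c] := by
  unfold σdot σx σy σz
  ext i j
  fin_cases i <;> fin_cases j <;> simp <;> ring

lemma σdot_sq (a b c : ℝ) :
    σdot a b c * σdot a b c = (((a^2 + b^2 + c^2 : ℝ)):ℂ) • 1 := by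
  rw [σdot_eq, Matrix.mul_fin_two]
  have h : ((a:ℂ) - b*Complex.I) * (a + b*Complex.I) = a^2 + b^2 := by
    have := Complex.I_sq; ring_nf; rw [Complex.I_sq]; ring
  ext i j
  fin_cases i <;> fin_cases j <;>
    simp [Matrix.one_apply] <;> push_cast <;> ring_nf <;>
    rw [Complex.I_sq] <;> ring

lemma σdot_smul (r a b c : ℝ) : (r:ℂ) • σdot a b c = σdot (r*a) (r*b) (r*c) := by
  simp only [σdot, smul_add, smul_smul]
  push_cast
  rfl

/-- For any 2×2 complex matrix `T`, the block-diagonal matrix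
`O = diag(T, (σ·p̂) T (σ·p̂))` commutes with the Dirac Hamiltonian. -/
theorem block_structure_commutes_with_hamiltonian (m c px py pz : ℝ)
    (hm : 0 < m) (hc : 0 < c) (hp : ![px, py, pz] ≠ 0)
    (T : Matrix (Fin 2) (Fin 2) ℂ) :
    let np : ℝ := Real.sqrt (px ^ 2 + py ^ 2 + pz ^ 2)
    let σph : Matrix (Fin 2) (Fin 2) ℂ := σdot (px / np) (py / np) (pz / np)
    let H : Matrix (Fin 2 ⊕ Fin 2) (Fin 2 ⊕ Fin 2) ℂ :=
      Matrix.fromBlocks (((m * c ^ 2 : ℝ) : ℂ) • 1) ((c : ℂ) • σdot px py pz)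
        ((c : ℂ) • σdot px py pz) (-(((m * c ^ 2 : ℝ) : ℂ) • 1))
    let O : Matrix (Fin 2 ⊕ Fin 2) (Fin 2 ⊕ Fin 2) ℂ :=
      Matrix.fromBlocks T 0 0 (σph * T * σph)
    H * O = O * H := by
  intro np σph H O
  have hpos : 0 < px ^ 2 + py ^ 2 + pz ^ 2 := by
    rcases lt_or_eq_of_le (by positivity : (0:ℝ) ≤ px ^ 2 + py ^ 2 + pz ^ 2) with h | h
    · exact h
    · exfalso
      have hx : px = 0 := by nlinarith [sq_nonneg px, sq_nonneg py, sq_nonneg pz]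
      have hy : py = 0 := by nlinarith [sq_nonneg px, sq_nonneg py, sq_nonneg pz]
      have hz : pz = 0 := by nlinarith [sq_nonneg px, sq_nonneg py, sq_nonneg pz]
      apply hp
      ext i
      fin_cases i <;> simp [hx, hy, hz]
  have hnp : np ≠ 0 := by
    simp only [np]
    positivity
  have hσ : σdot px py pz = (np : ℂ) • σph := by
    rw [show σph = σdot (px / np) (py / np) (pz / np) from rfl, σdot_smul]
    congr 1 <;> field_simp
  have hsq : σph * σph = 1 := by
    rw [show σph = σdot (px / np) (py / np) (pz / np) from rfl, σdot_sq]
    have : (px / np) ^ 2 + (py / np) ^ 2 + (pz / np) ^ 2 = 1 := by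
      field_simp
      rw [show np ^ 2 = px ^ 2 + py ^ 2 + pz ^ 2 from Real.sq_sqrt hpos.le]
    rw [this]
    simp
  have key1 : σdot px py pz * (σph * T * σph) = T * σdot px py pz := by
    rw [hσ, Matrix.smul_mul, Matrix.mul_smul]
    congr 1
    calc σph * (σph * T * σph) = (σph * σph) * T * σph := by rw [mul_assoc, mul_assoc, mul_assoc]
      _ = T * σph := by rw [hsq, one_mul]
  have key2 : σdot px py pz * T = σph * T * σph * σdot px py pz := by
    rw [hσ, Matrix.smul_mul, Matrix.mul_smul]
    congr 1
    calc σph * T = σph * T * (σph * σph) := by rw [hsq, mul_one]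
      _ = σph * T * σph * σph := by simp [mul_assoc]
  show Matrix.fromBlocks _ _ _ _ * Matrix.fromBlocks _ _ _ _ = _
  rw [Matrix.fromBlocks_multiply, Matrix.fromBlocks_multiply]
  simp [Matrix.smul_mul, Matrix.mul_smul, key1, key2]
end

section
/- For p ∈ ℝ³ with p ≠ 0 and p̂ = p/|p|, define Λ'_j = (ħ/2) diag(σ_j, (σ·p̂) σ_j (σ·p̂)) for j = x, y, z. Then the vector of operators Λ' = (Λ'_x, Λ'_y, Λ'_z) satisfies the angular momentum algebra [Λ'_x, Λ'_y] = iħ Λ'_z (and cyclic permutations), i.e. Λ' × Λ' = iħ Λ'. -/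
noncomputable def pauli : Fin 3 → Matrix (Fin 2) (Fin 2) ℂ := ![σx, σy, σz]

lemma key (S A B C : Matrix (Fin 2) (Fin 2) ℂ) (hS : S * S = 1)
    (hAB : A * B - B * A = (2 * Complex.I) • C) (c : ℂ) :
    (c • Matrix.fromBlocks A 0 0 (S * A * S)) * (c • Matrix.fromBlocks B 0 0 (S * B * S)) -
      (c • Matrix.fromBlocks B 0 0 (S * B * S)) * (c • Matrix.fromBlocks A 0 0 (S * A * S)) =
    (Complex.I * (2 * c)) • (c • Matrix.fromBlocks C 0 0 (S * C * S)) := by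
  have h1 : (S * A * S) * (S * B * S) = S * (A * B) * S := by
    calc (S * A * S) * (S * B * S) = S * A * (S * S) * B * S := by noncomm_ring
    _ = S * (A * B) * S := by rw [hS]; noncomm_ring
  have h2 : (S * B * S) * (S * A * S) = S * (B * A) * S := by
    calc (S * B * S) * (S * A * S) = S * B * (S * S) * A * S := by noncomm_ring
    _ = S * (B * A) * S := by rw [hS]; noncomm_ring
  rw [Matrix.smul_mul, Matrix.mul_smul, Matrix.smul_mul, Matrix.mul_smul,
    Matrix.fromBlocks_multiply, Matrix.fromBlocks_multiply, ← smul_sub, ← smul_sub]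
  simp only [Matrix.mul_zero, Matrix.zero_mul, add_zero, zero_add, h1, h2]
  have hsub : Matrix.fromBlocks (A*B) 0 0 (S*(A*B)*S) - Matrix.fromBlocks (B*A) 0 0 (S*(B*A)*S)
      = Matrix.fromBlocks (A*B - B*A) 0 0 (S*(A*B)*S - S*(B*A)*S) := by
    ext (i|i) (j|j) <;> simp [Matrix.fromBlocks, Matrix.sub_apply]
  rw [hsub]
  have h3 : S*(A*B)*S - S*(B*A)*S = (2*Complex.I) • (S * C * S) := by
    rw [show S*(A*B)*S - S*(B*A)*S = S * (A*B - B*A) * S by noncomm_ring, hAB,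
      Matrix.mul_smul, Matrix.smul_mul]
  rw [h3, hAB]
  rw [show Matrix.fromBlocks ((2*Complex.I) • C) 0 0 ((2*Complex.I) • (S*C*S))
      = (2*Complex.I) • Matrix.fromBlocks C 0 0 (S*C*S) by simp [Matrix.fromBlocks_smul]]
  rw [smul_smul, smul_smul, smul_smul]
  congr 1
  ring

lemma pauli_sq (a b c : ℝ) (h : a^2 + b^2 + c^2 = 1) : σdot a b c * σdot a b c = 1 := by
  have hc : (a:ℂ)^2 + (b:ℂ)^2 + (c:ℂ)^2 = 1 := by
    have := h
    push_cast
    exact_mod_cast congrArg (Complex.ofReal) h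
  ext i j
  fin_cases i <;> fin_cases j <;>
    simp [σdot, σx, σy, σz, Matrix.mul_apply, Fin.sum_univ_two, Matrix.one_apply,
      Complex.I_sq] <;>
    first
      | ring1
      | linear_combination hc
      | linear_combination -hc
      | linear_combination hc - (b:ℂ)^2 * Complex.I_sq

/-- The rotated helicity operators `Λ'_j = (ħ/2) diag(σ_j, (σ·p̂) σ_j (σ·p̂))` satisfy
the angular momentum algebra `[Λ'_x, Λ'_y] = iħ Λ'_z` and cyclic permutations,
i.e. `Λ' × Λ' = iħ Λ'`. -/
theorem rotated_helicity_angular_momentum (hbar px py pz : ℝ)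
    (hhb : 0 < hbar) (hp : ![px, py, pz] ≠ 0) :
    let np : ℝ := Real.sqrt (px ^ 2 + py ^ 2 + pz ^ 2)
    let σph : Matrix (Fin 2) (Fin 2) ℂ := σdot (px / np) (py / np) (pz / np)
    let Λ : Fin 3 → Matrix (Fin 2 ⊕ Fin 2) (Fin 2 ⊕ Fin 2) ℂ := fun j =>
      ((hbar / 2 : ℝ) : ℂ) • Matrix.fromBlocks (pauli j) 0 0 (σph * pauli j * σph)
    (Λ 0 * Λ 1 - Λ 1 * Λ 0 = (Complex.I * (hbar : ℂ)) • Λ 2) ∧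
    (Λ 1 * Λ 2 - Λ 2 * Λ 1 = (Complex.I * (hbar : ℂ)) • Λ 0) ∧
    (Λ 2 * Λ 0 - Λ 0 * Λ 2 = (Complex.I * (hbar : ℂ)) • Λ 1) := by
  intro np σph Λ
  have hnp2 : 0 < px ^ 2 + py ^ 2 + pz ^ 2 := by
    rcases lt_or_eq_of_le (by positivity : (0:ℝ) ≤ px^2+py^2+pz^2) with h | h
    · exact h
    · exfalso; apply hp
      have hx : px = 0 := by nlinarith [sq_nonneg px, sq_nonneg py, sq_nonneg pz]
      have hy : py = 0 := by nlinarith [sq_nonneg px, sq_nonneg py, sq_nonneg pz]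
      have hz : pz = 0 := by nlinarith [sq_nonneg px, sq_nonneg py, sq_nonneg pz]
      funext i; fin_cases i <;> simp [hx, hy, hz]
  have hnp : 0 < np := Real.sqrt_pos.mpr hnp2
  have hS : σph * σph = 1 := by
    apply pauli_sq
    have : np ^ 2 = px ^ 2 + py ^ 2 + pz ^ 2 := Real.sq_sqrt hnp2.le
    field_simp
    linarith
  have hxy : σx * σy - σy * σx = (2 * Complex.I) • σz := by
    ext i j; fin_cases i <;> fin_cases j <;>
      simp [σx, σy, σz, Matrix.mul_apply, Fin.sum_univ_two] <;> first | ring1 | linear_combination 2*Complex.I_sq | linear_combination (-2:ℂ)*Complex.I_sq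
  have hyz : σy * σz - σz * σy = (2 * Complex.I) • σx := by
    ext i j; fin_cases i <;> fin_cases j <;>
      simp [σx, σy, σz, Matrix.mul_apply, Fin.sum_univ_two] <;> first | ring1 | linear_combination 2*Complex.I_sq | linear_combination (-2:ℂ)*Complex.I_sq
  have hzx : σz * σx - σx * σz = (2 * Complex.I) • σy := by
    ext i j; fin_cases i <;> fin_cases j <;>
      simp [σx, σy, σz, Matrix.mul_apply, Fin.sum_univ_two] <;> first | ring1 | linear_combination 2*Complex.I_sq | linear_combination (-2:ℂ)*Complex.I_sq
  have hc : Complex.I * ((hbar : ℂ)) = Complex.I * (2 * ((hbar/2 : ℝ) : ℂ)) := by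
    push_cast; ring
  refine ⟨?_, ?_, ?_⟩ <;>
    simp only [Λ, pauli, Matrix.cons_val_zero, Matrix.cons_val_one, Matrix.head_cons,
      Matrix.cons_val_two, Matrix.tail_cons, hc]
  · exact key σph σx σy σz hS hxy _
  · exact key σph σy σz σx hS hyz _
  · exact key σph σz σx σy hS hzx _
end

section
/- Let Ω₁(t), Ω₂(t) be differentiable real-valued functions with Ω₁² + Ω₂² > 0, let G₁, G₂ ∈ ℝ, and set θ_a = -arctan(G₂Ω₂/(Ω₁ + G₁Ω₂)) and θ_b = -arctan(G₂Ω₁/(G₁Ω₁ - Ω₂)) (interpreted via the argument of the corresponding complex numbers Ω₁ + (G₁+iG₂)Ω₂ and -Ω₂ + (G₁+iG₂)Ω₁). With weights w_a = ((Ω₁+G₁Ω₂)² + G₂²Ω₂²)/((1+G₁²+G₂²)(Ω₁²+Ω₂²)) and w_b = ((G₁Ω₁-Ω₂)² + G₂²Ω₁²)/((1+G₁²+G₂²)(Ω₁²+Ω₂²)), the weighted derivative satisfies w_a θ_a' + w_b θ_b' = 2G₂(Ω₁'Ω₂ - Ω₁Ω₂')/((1+G₁²+G₂²)(Ω₁²+Ω₂²)).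 -/
/-! The phase `arctan (N/D)` of `D + iN` has derivative `(N'D - ND')/(D² + N²)`, and each weight
is `(D² + N²)/K` with the common `K = (1 + G₁² + G₂²)(Ω₁² + Ω₂²)`. So the weights cancel the
denominators of the phase derivatives, and what remains is a polynomial identity divided by `K`. -/

theorem HasDerivAt.arctan_div {N D : ℝ → ℝ} {n d t : ℝ} (hN : HasDerivAt N n t)
    (hD : HasDerivAt D d t) (hDt : D t ≠ 0) :
    HasDerivAt (fun s => Real.arctan (N s / D s)) ((n * D t - N t * d) / (D t ^ 2 + N t ^ 2)) t := by
  have hq : HasDerivAt (fun s => N s / D s) ((n * D t - N t * d) / D t ^ 2) t := hN.div hD hDt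
  refine hq.arctan.congr_deriv ?_
  field_simp

theorem sq_add_sq_div_mul_deriv_neg_arctan_div {N D : ℝ → ℝ} {n d t : ℝ} (K : ℝ)
    (hN : HasDerivAt N n t) (hD : HasDerivAt D d t) (hDt : D t ≠ 0) :
    (D t ^ 2 + N t ^ 2) / K * deriv (fun s => -Real.arctan (N s / D s)) t
      = -(n * D t - N t * d) / K := by
  have hS : D t ^ 2 + N t ^ 2 ≠ 0 := by positivity
  have hθ : HasDerivAt (fun s => -Real.arctan (N s / D s)) _ t := (hN.arctan_div hD hDt).neg
  rw [hθ.deriv]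
  field_simp

theorem weighted_phase_derivative_general (Ω₁ Ω₂ : ℝ → ℝ) (G₁ G₂ t : ℝ)
    (h1 : DifferentiableAt ℝ Ω₁ t) (h2 : DifferentiableAt ℝ Ω₂ t)
    (hda : Ω₁ t + G₁ * Ω₂ t ≠ 0) (hdb : G₁ * Ω₁ t - Ω₂ t ≠ 0) :
    let θa : ℝ → ℝ := fun s => -Real.arctan (G₂ * Ω₂ s / (Ω₁ s + G₁ * Ω₂ s))
    let θb : ℝ → ℝ := fun s => -Real.arctan (G₂ * Ω₁ s / (G₁ * Ω₁ s - Ω₂ s))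
    let wa : ℝ := ((Ω₁ t + G₁ * Ω₂ t) ^ 2 + G₂ ^ 2 * Ω₂ t ^ 2) /
      ((1 + G₁ ^ 2 + G₂ ^ 2) * (Ω₁ t ^ 2 + Ω₂ t ^ 2))
    let wb : ℝ := ((G₁ * Ω₁ t - Ω₂ t) ^ 2 + G₂ ^ 2 * Ω₁ t ^ 2) /
      ((1 + G₁ ^ 2 + G₂ ^ 2) * (Ω₁ t ^ 2 + Ω₂ t ^ 2))
    wa * deriv θa t + wb * deriv θb t
      = 2 * G₂ * (deriv Ω₁ t * Ω₂ t - Ω₁ t * deriv Ω₂ t) /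
        ((1 + G₁ ^ 2 + G₂ ^ 2) * (Ω₁ t ^ 2 + Ω₂ t ^ 2)) := by
  intro θa θb wa wb
  have h1' := h1.hasDerivAt
  have h2' := h2.hasDerivAt
  have ha := sq_add_sq_div_mul_deriv_neg_arctan_div (N := fun s => G₂ * Ω₂ s)
    (D := fun s => Ω₁ s + G₁ * Ω₂ s) ((1 + G₁ ^ 2 + G₂ ^ 2) * (Ω₁ t ^ 2 + Ω₂ t ^ 2))
    (h2'.const_mul G₂) (h1'.add (h2'.const_mul G₁)) hda
  have hb := sq_add_sq_div_mul_deriv_neg_arctan_div (N := fun s => G₂ * Ω₁ s)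
    (D := fun s => G₁ * Ω₁ s - Ω₂ s) ((1 + G₁ ^ 2 + G₂ ^ 2) * (Ω₁ t ^ 2 + Ω₂ t ^ 2))
    (h1'.const_mul G₂) ((h1'.const_mul G₁).sub h2') hdb
  simp only [mul_pow] at ha hb
  simp only [wa, wb, θa, θb, ha, hb]
  ring

/-- The probability-weighted combination of the derivatives of the two phases
`θ_a = -arctan(G₂Ω₂/(Ω₁ + G₁Ω₂))` and `θ_b = -arctan(G₂Ω₁/(G₁Ω₁ - Ω₂))` equals
`2G₂(Ω₁'Ω₂ - Ω₁Ω₂') / ((1+G₁²+G₂²)(Ω₁²+Ω₂²))`. -/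
theorem weighted_phase_derivative (Ω₁ Ω₂ : ℝ → ℝ) (G₁ G₂ t : ℝ)
    (h1 : DifferentiableAt ℝ Ω₁ t) (h2 : DifferentiableAt ℝ Ω₂ t)
    (hpos : 0 < Ω₁ t ^ 2 + Ω₂ t ^ 2)
    (hda : Ω₁ t + G₁ * Ω₂ t ≠ 0) (hdb : G₁ * Ω₁ t - Ω₂ t ≠ 0) :
    let θa : ℝ → ℝ := fun s => -Real.arctan (G₂ * Ω₂ s / (Ω₁ s + G₁ * Ω₂ s))
    let θb : ℝ → ℝ := fun s => -Real.arctan (G₂ * Ω₁ s / (G₁ * Ω₁ s - Ω₂ s))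
    let wa : ℝ := ((Ω₁ t + G₁ * Ω₂ t) ^ 2 + G₂ ^ 2 * Ω₂ t ^ 2) /
      ((1 + G₁ ^ 2 + G₂ ^ 2) * (Ω₁ t ^ 2 + Ω₂ t ^ 2))
    let wb : ℝ := ((G₁ * Ω₁ t - Ω₂ t) ^ 2 + G₂ ^ 2 * Ω₁ t ^ 2) /
      ((1 + G₁ ^ 2 + G₂ ^ 2) * (Ω₁ t ^ 2 + Ω₂ t ^ 2))
    wa * deriv θa t + wb * deriv θb t
      = 2 * G₂ * (deriv Ω₁ t * Ω₂ t - Ω₁ t * deriv Ω₂ t) /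
        ((1 + G₁ ^ 2 + G₂ ^ 2) * (Ω₁ t ^ 2 + Ω₂ t ^ 2)) :=
  weighted_phase_derivative_general Ω₁ Ω₂ G₁ G₂ t h1 h2 hda hdb
end

section
/- Let E > mc² > 0, V₀ > 0 with E - V₀ > mc², n = (E + mc²)/(E - V₀ + mc²), and k_x, k_x', k_z > 0. Then n > 1, and the transmitted-wave shift Δz_t = (1 - n) · [(k_x + n k_x') + (k_z²/(k_x k_x'))(k_x' + n k_x)] / [(k_x + n k_x')² + (k_z(1-n))²] is strictly negative. -/
/-- For a Dirac electron at a potential step with `E - V₀ > mc²` the "refractive index"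
`n = (E+mc²)/(E-V₀+mc²)` exceeds `1`, and the transmitted-wave spatial shift is strictly
negative. -/
theorem transmitted_shift_negative (E m c V₀ kx kx' kz : ℝ)
    (hmc : 0 < m * c ^ 2) (hE : m * c ^ 2 < E) (hV : 0 < V₀)
    (hEV : m * c ^ 2 < E - V₀) (hkx : 0 < kx) (hkx' : 0 < kx') (hkz : 0 < kz) :
    let n : ℝ := (E + m * c ^ 2) / (E - V₀ + m * c ^ 2)
    (1 < n) ∧
    (1 - n) * ((kx + n * kx') + (kz ^ 2 / (kx * kx')) * (kx' + n * kx)) /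
        ((kx + n * kx') ^ 2 + (kz * (1 - n)) ^ 2) < 0 := by
  intro n
  have hden : 0 < E - V₀ + m * c ^ 2 := by linarith
  have hn : 1 < n := by
    rw [lt_div_iff₀ hden]; linarith
  refine ⟨hn, ?_⟩
  have hnpos : 0 < n := by linarith
  have h1 : (1 - n) * ((kx + n * kx') + (kz ^ 2 / (kx * kx')) * (kx' + n * kx)) < 0 := by
    apply mul_neg_of_neg_of_pos (by linarith)
    have := div_pos (pow_pos hkz 2) (mul_pos hkx hkx')
    positivity
  apply div_neg_of_neg_of_pos h1
  have h2 : 0 < kx + n * kx' := by positivity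
  positivity
end
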